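/- (Proposition 1, first bound) There is an absolute constant K such that for all integers N ≥ 4, |G(N) − N²/2| ≤ K · N · max_{0 ≤ u ≤ N} |R(u)|. -/

import Mathlib

noncomputable def Lam (n : ℕ) : ℝ := ArithmeticFunction.vonMangoldt n

/-- ψ₂(n) = Σ_{m+m'=n, m,m'≥1} Λ(m)Λ(m')  (terms with m = 0 vanish since Λ(0)=0). -/
noncomputable def psi2 (n : ℕ) : ℝ := ∑ m ∈ Finset.range n, Lam m * Lam (n - m)

/-- G(N) = Σ_{n ≤ N} ψ₂(n). -/
noncomputable def G (N : ℕ) : ℝ := ∑ n ∈ Finset.Icc 1 N, psi2 n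

/-- ψ(x) = Σ_{n ≤ x} Λ(n). -/
noncomputable def psi (x : ℝ) : ℝ := ∑ n ∈ Finset.Icc 1 ⌊x⌋₊, Lam n

/-- R(x) = ψ(x) − x. -/
noncomputable def RR (x : ℝ) : ℝ := psi x - x

/-- ψ₁(x) = Σ_{n ≤ x} (x − n)Λ(n). -/
noncomputable def psi1 (x : ℝ) : ℝ := ∑ n ∈ Finset.Icc 1 ⌊x⌋₊, (x - (n : ℝ)) * Lam n

/-- R₁(x) = ψ₁(x) − x²/2. -/
noncomputable def R1 (x : ℝ) : ℝ := psi1 x - x ^ 2 / 2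

/-- Λ₀(n) = Λ(n) − 1 for n ≥ 1, and 0 otherwise. -/
noncomputable def Lam0 (n : ℕ) : ℝ := if 1 ≤ n then Lam n - 1 else 0

/-- ψ₂⁰(n) = Σ_{m+m'=n, m,m'≥1} Λ₀(m)Λ₀(m')  (the m = 0 term vanishes since Λ₀(0)=0). -/
noncomputable def psi20 (n : ℕ) : ℝ := ∑ m ∈ Finset.range n, Lam0 m * Lam0 (n - m)

/-- Ψ(z) = Σ_{n ≥ 1} Λ(n) zⁿ. -/
noncomputable def PsiC (z : ℂ) : ℂ := ∑' n : ℕ, (Lam n : ℂ) * z ^ n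

/-- K_N(z) = Σ_{n=1}^{N} z^{−n}. -/
noncomputable def KN (N : ℕ) (z : ℂ) : ℂ := ∑ n ∈ Finset.Icc 1 N, z ^ (-(n : ℤ))

/-- ω(x) = inf_{u ≥ 1} (η(u)·log x + log u). -/
noncomputable def omegaFn (η : ℝ → ℝ) (x : ℝ) : ℝ :=
  sInf ((fun u => η u * Real.log x + Real.log u) '' Set.Ici 1)

/-- ϖ(x) = inf_{u ≥ 0} (η(u)·log x + u). -/
noncomputable def varpi (η : ℝ → ℝ) (x : ℝ) : ℝ :=
  sInf ((fun u => η u * Real.log x + u) '' Set.Ici 0)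

/-- F(N) = Σ_{n ≥ 1} ψ₂(n) e^{−n/N}  (the n = 0 term vanishes since ψ₂(0)=0). -/
noncomputable def Fav (N : ℕ) : ℝ := ∑' n : ℕ, psi2 n * Real.exp (-(n : ℝ) / N)

/-!
Swapping the order of summation gives G(N) = Σ_{m<N} Λ(m) ψ(N - m). Writing ψ = id + R, the main
part Σ_{m<N} Λ(m)(N - m) equals Σ_{n<N} ψ(n) = N(N - 1)/2 + Σ_{n<N} R(n), so G(N) - N²/2 is
-N/2 plus two sums of values of R on [0, N]; the one weighted by Λ costs a factor ψ(N) = O(N)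
by Chebyshev's bound.
-/

open Finset

section SumIdentities

variable {R : Type*}

theorem sum_Icc_sum_range_mul_sub [NonUnitalNonAssocSemiring R] (f g : ℕ → R) (N : ℕ) :
    ∑ n ∈ Icc 1 N, ∑ m ∈ range n, f m * g (n - m) =
      ∑ m ∈ range N, f m * ∑ j ∈ Icc 1 (N - m), g j := by
  simp_rw [mul_sum]
  rw [sum_sigma', sum_sigma']
  refine sum_nbij' (fun x => ⟨x.2, x.1 - x.2⟩) (fun x => ⟨x.1 + x.2, x.1⟩) ?_ ?_ ?_ ?_
    (fun _ _ => rfl) <;>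
  · rintro ⟨a, b⟩ h
    simp only [mem_sigma, mem_Icc, mem_range, Sigma.mk.injEq, heq_eq_eq, and_true, true_and] at h ⊢
    omega

theorem sum_range_mul_sub_eq_sum_range_partialSum [CommRing R] (f : ℕ → R) (N : ℕ) :
    ∑ m ∈ range N, f m * ((N : R) - m) = ∑ n ∈ range N, ∑ m ∈ range (n + 1), f m := by
  induction N with
  | zero => simp
  | succ N ih =>
    simp only [sum_range_succ _ N, ← ih, Nat.cast_succ, sub_self, mul_zero, zero_add, add_assoc,
      add_sub_right_comm _ (1 : R), mul_add, mul_one, sum_add_distrib]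

theorem sum_range_natCast_mul_two [CommRing R] (N : ℕ) :
    (∑ n ∈ range N, (n : R)) * 2 = N * (N - 1) := by
  induction N with
  | zero => simp
  | succ N ih => rw [sum_range_succ, add_mul, ih]; push_cast; ring

end SumIdentities

theorem Lam_nonneg (n : ℕ) : 0 ≤ Lam n := ArithmeticFunction.vonMangoldt_nonneg

theorem psi_eq_chebyshev_psi (x : ℝ) : psi x = Chebyshev.psi x := by
  rw [psi, Chebyshev.psi, ← Icc_add_one_left_eq_Ioc]
  rfl

theorem psi_natCast (n : ℕ) : psi n = ∑ m ∈ range (n + 1), Lam m := by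
  rw [psi_eq_chebyshev_psi, Chebyshev.psi_eq_sum_Icc, Nat.floor_natCast,
    Nat.range_succ_eq_Icc_zero]
  rfl

theorem G_eq_sum_Lam_mul_psi (N : ℕ) :
    G N = ∑ m ∈ range N, Lam m * psi ((N - m : ℕ) : ℝ) := by
  simp only [G, psi2, psi, Nat.floor_natCast]
  exact sum_Icc_sum_range_mul_sub Lam Lam N

theorem G_sub_half_sq (N : ℕ) :
    G N - (N : ℝ) ^ 2 / 2 = -(N / 2) + ∑ n ∈ range N, RR n +
      ∑ m ∈ range N, Lam m * RR ((N - m : ℕ) : ℝ) := by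
  have main_term : ∑ m ∈ range N, Lam m * ((N : ℝ) - m) =
      N * (N - 1) / 2 + ∑ n ∈ range N, RR n := by
    simp only [sum_range_mul_sub_eq_sum_range_partialSum, ← psi_natCast, RR, sum_sub_distrib]
    linarith [sum_range_natCast_mul_two (R := ℝ) N]
  have split : G N = ∑ m ∈ range N, Lam m * ((N : ℝ) - m) +
      ∑ m ∈ range N, Lam m * RR ((N - m : ℕ) : ℝ) := by
    rw [G_eq_sum_Lam_mul_psi, ← sum_add_distrib]
    refine sum_congr rfl fun m hm => ?_
    rw [RR, Nat.cast_sub (mem_range.mp hm).le]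
    ring
  rw [split, main_term]
  ring

noncomputable def supAbsRR (x : ℝ) : ℝ := sSup ((fun u => |RR u|) '' Set.Icc 0 x)

theorem bddAbove_abs_RR_image (x : ℝ) : BddAbove ((fun u => |RR u|) '' Set.Icc 0 x) := by
  refine ⟨psi x + x, ?_⟩
  rintro _ ⟨u, ⟨hu0, hux⟩, rfl⟩
  have hpsi : psi u ≤ psi x := by
    simpa only [psi_eq_chebyshev_psi] using Chebyshev.psi_mono hux
  calc |RR u| ≤ |psi u| + |u| := abs_sub _ _
    _ = psi u + u := by
      rw [abs_of_nonneg hu0, abs_of_nonneg (psi_eq_chebyshev_psi u ▸ Chebyshev.psi_nonneg u)]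
    _ ≤ psi x + x := add_le_add hpsi hux

theorem abs_RR_le_supAbsRR {u x : ℝ} (hu : u ∈ Set.Icc 0 x) : |RR u| ≤ supAbsRR x :=
  le_csSup (bddAbove_abs_RR_image x) ⟨u, hu, rfl⟩

theorem supAbsRR_nonneg {x : ℝ} (hx : 0 ≤ x) : 0 ≤ supAbsRR x :=
  (abs_nonneg _).trans (abs_RR_le_supAbsRR ⟨le_rfl, hx⟩)

-- ψ vanishes below 2, so |R(3/2)| = 3/2; this lets the sup absorb the term -N/2.
theorem three_halves_le_supAbsRR {x : ℝ} (hx : 3 / 2 ≤ x) : 3 / 2 ≤ supAbsRR x := by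
  have hRR : RR (3 / 2) = -(3 / 2) := by
    rw [RR, psi_eq_chebyshev_psi, Chebyshev.psi_eq_zero_of_lt_two (by norm_num)]
    ring
  calc (3 / 2 : ℝ) = |RR (3 / 2)| := by rw [hRR, abs_neg, abs_of_pos (by norm_num)]
    _ ≤ supAbsRR x := abs_RR_le_supAbsRR ⟨by norm_num, hx⟩

theorem abs_sum_range_RR_le (N : ℕ) : |∑ n ∈ range N, RR n| ≤ N * supAbsRR N := by
  calc |∑ n ∈ range N, RR n| ≤ ∑ n ∈ range N, |RR n| := abs_sum_le_sum_abs _ _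
    _ ≤ ∑ _n ∈ range N, supAbsRR N := sum_le_sum fun n hn =>
        abs_RR_le_supAbsRR ⟨n.cast_nonneg, by exact_mod_cast (mem_range.mp hn).le⟩
    _ = N * supAbsRR N := by rw [sum_const, card_range, nsmul_eq_mul]

theorem abs_sum_Lam_mul_RR_le (N : ℕ) :
    |∑ m ∈ range N, Lam m * RR ((N - m : ℕ) : ℝ)| ≤ (Real.log 4 + 4) * N * supAbsRR N := by
  have hM := supAbsRR_nonneg N.cast_nonneg
  have hLam : ∑ m ∈ range N, Lam m ≤ psi N := by
    rw [psi_natCast, sum_range_succ]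
    linarith [Lam_nonneg N]
  calc |∑ m ∈ range N, Lam m * RR ((N - m : ℕ) : ℝ)|
      ≤ ∑ m ∈ range N, Lam m * |RR ((N - m : ℕ) : ℝ)| := by
        refine (abs_sum_le_sum_abs _ _).trans_eq (sum_congr rfl fun m _ => ?_)
        rw [abs_mul, abs_of_nonneg (Lam_nonneg m)]
    _ ≤ ∑ m ∈ range N, Lam m * supAbsRR N := sum_le_sum fun m _ =>
        mul_le_mul_of_nonneg_left
          (abs_RR_le_supAbsRR ⟨Nat.cast_nonneg _, by exact_mod_cast N.sub_le m⟩) (Lam_nonneg m)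
    _ = (∑ m ∈ range N, Lam m) * supAbsRR N := (sum_mul _ _ _).symm
    _ ≤ psi N * supAbsRR N := mul_le_mul_of_nonneg_right hLam hM
    _ ≤ (Real.log 4 + 4) * N * supAbsRR N := by
        rw [psi_eq_chebyshev_psi]
        exact mul_le_mul_of_nonneg_right (Chebyshev.psi_le_const_mul_self N.cast_nonneg) hM

theorem abs_G_sub_half_sq_le {N : ℕ} (hN : 2 ≤ N) :
    |G N - (N : ℝ) ^ 2 / 2| ≤ (Real.log 4 + 6) * N * supAbsRR N := by
  have hM : 3 / 2 ≤ supAbsRR N :=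
    three_halves_le_supAbsRR (by linarith [show (2 : ℝ) ≤ N by exact_mod_cast hN])
  have hhalf : |-((N : ℝ) / 2)| ≤ N * supAbsRR N := by
    rw [abs_neg, abs_of_nonneg (by positivity)]
    nlinarith [N.cast_nonneg (α := ℝ)]
  rw [G_sub_half_sq]
  refine (abs_add_le _ _).trans ((add_le_add (abs_add_le _ _) le_rfl).trans ?_)
  linarith [abs_sum_range_RR_le N, abs_sum_Lam_mul_RR_le N]

/-- Proposition 1, first bound: |G(N) − N²/2| ≤ K·N·max_{0 ≤ u ≤ N} |R(u)| for N ≥ 4. -/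
theorem stmt_2 : ∃ K : ℝ, ∀ N : ℕ, 4 ≤ N →
    |G N - (N : ℝ) ^ 2 / 2| ≤ K * (N : ℝ) * sSup ((fun u => |RR u|) '' Set.Icc 0 (N : ℝ)) :=
  ⟨Real.log 4 + 6, fun _ hN => abs_G_sub_half_sq_le (by omega)⟩
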